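/- arXiv:1001.5069 — 7 statements merged into one kernel-verified Lean document; each statement's English description precedes it below -/
import Mathlib

section
/- Let G be a group, A a finite subset of G, and K ≥ 1 a real number. If |A·A| ≤ K|A|, then |A·A⁻¹| ≤ K²|A|. -/
open Pointwise

theorem stmt_1_general {G : Type*} [Group G] [DecidableEq G]
    (A : Finset G) (K : ℝ)
    (h : ((A * A).card : ℝ) ≤ K * A.card) :
    ((A * A⁻¹).card : ℝ) ≤ K ^ 2 * A.card := by
  rcases A.eq_empty_or_nonempty with rfl | hA
  · simp
  have hA_pos : (0 : ℝ) < A.card := by exact_mod_cast hA.card_pos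
  have ruzsa : ((A * A⁻¹).card : ℝ) * A.card ≤ (A * A).card * (A * A).card := by
    exact_mod_cast Finset.ruzsa_triangle_inequality_mulInv_mul_mul A A A
  refine le_of_mul_le_mul_right ?_ hA_pos
  calc ((A * A⁻¹).card : ℝ) * A.card ≤ (A * A).card * (A * A).card := ruzsa
    _ ≤ (K * A.card) * (K * A.card) := mul_self_le_mul_self (Nat.cast_nonneg _) h
    _ = K ^ 2 * A.card * A.card := by ring

theorem stmt_1 {G : Type*} [Group G] [DecidableEq G]
    (A : Finset G) (K : ℝ) (hK : 1 ≤ K)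
    (h : ((A * A).card : ℝ) ≤ K * A.card) :
    ((A * A⁻¹).card : ℝ) ≤ K ^ 2 * A.card :=
  stmt_1_general A K h
end

section
/- Let G be a group and A a finite subset containing 1 with A = A⁻¹. If |A·A·A| ≤ K|A| for some real K ≥ 1, then for every integer n ≥ 3, |Aⁿ| ≤ K^{n-2}|A|, where Aⁿ denotes the n-fold product set. -/
open Pointwise

theorem stmt_4_general {G : Type*} [Group G] [DecidableEq G]
    (A : Finset G) (hsymm : A = A⁻¹)
    (K : ℝ)
    (h : ((A * A * A).card : ℝ) ≤ K * A.card)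
    (n : ℕ) (hn : 3 ≤ n) :
    ((A ^ n).card : ℝ) ≤ K ^ (n - 2) * A.card :=
  Finset.small_pow_of_small_tripling hn (by rwa [pow_succ, pow_two]) hsymm.symm

theorem stmt_4 {G : Type*} [Group G] [DecidableEq G]
    (A : Finset G) (hone : (1 : G) ∈ A) (hsymm : A = A⁻¹)
    (K : ℝ) (hK : 1 ≤ K)
    (h : ((A * A * A).card : ℝ) ≤ K * A.card)
    (n : ℕ) (hn : 3 ≤ n) :
    ((A ^ n).card : ℝ) ≤ K ^ (n - 2) * A.card :=
  stmt_4_general A hsymm K h n hn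
end

section
/- Let G be a finite group of order N, let M be the minimal dimension of a nontrivial real irreducible representation of G, and let X, Y be probability densities on G. Then ‖X∗Y − U‖ ≤ √(N/M) · ‖X − U‖ · ‖Y − U‖, where U is the uniform density and ∗ is convolution. -/
open CategoryTheory

/-- The ℓ² norm of a real-valued function on a finite group. -/
noncomputable def l2Norm {G : Type*} [Fintype G] (f : G → ℝ) : ℝ :=
  Real.sqrt (∑ g, (f g) ^ 2)

/-- Convolution of two real-valued functions on a group. -/
noncomputable def conv {G : Type*} [Group G] [Fintype G] (X Y : G → ℝ) : G → ℝ :=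
  fun g => ∑ h, X h * Y (h⁻¹ * g)

/-!
Put `f = X - U` and `g = Y - U`, so that `X ∗ Y - U = f ∗ g` and `∑ f = 0`. Left convolution
`T = f ∗ ·` commutes with the right regular representation, hence so does `T† T`, and every
eigenspace of `T† T` is a subrepresentation. For an eigenvalue `μ > 0` it contains no nonzero
invariant vector (`T` kills constants since `∑ f = 0`), so it contains a nontrivial irreducible
subrepresentation and has dimension at least `M`. As `T† T` is positive, `μ M ≤ tr (T† T) = N ‖f‖²`,
whence `‖f ∗ g‖² = ⟪T† T g, g⟫ ≤ (N / M) ‖f‖² ‖g‖²`.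
-/

universe u v

open Module Module.End LinearMap
open scoped RealInnerProductSpace

namespace LinearMap

variable {E : Type*} [NormedAddCommGroup E] [InnerProductSpace ℝ E] [FiniteDimensional ℝ E]

theorem IsSymmetric.inner_apply_self_le {T : E →ₗ[ℝ] E} (hT : T.IsSymmetric) {c : ℝ}
    (hc : ∀ μ, HasEigenvalue T μ → μ ≤ c) (v : E) : ⟪T v, v⟫ ≤ c * ‖v‖ ^ 2 := by
  let b := hT.eigenvectorBasis rfl
  have hb : ∀ i, T (b i) = hT.eigenvalues rfl i • b i := fun i =>
    hT.apply_eigenvectorBasis rfl i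
  calc ⟪T v, v⟫ = ∑ i, hT.eigenvalues rfl i * ⟪b i, v⟫ ^ 2 := by
        rw [← b.sum_inner_mul_inner]
        refine Finset.sum_congr rfl fun i _ => ?_
        rw [hT, hb, real_inner_smul_right, real_inner_comm]
        ring
    _ ≤ ∑ i, c * ⟪b i, v⟫ ^ 2 := by
        gcongr with i
        exact hc _ (hT.hasEigenvalue_eigenvalues rfl i)
    _ = c * ‖v‖ ^ 2 := by rw [← Finset.mul_sum, b.sum_sq_inner_right]

theorem IsPositive.mul_finrank_eigenspace_le_trace {T : E →ₗ[ℝ] E} (hT : T.IsPositive) (μ : ℝ) :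
    μ * finrank ℝ (eigenspace T μ) ≤ trace ℝ E T := by
  have hT' := hT.isSymmetric
  rw [hT'.trace_eq_sum_eigenvalues rfl, ← hT'.card_filter_eigenvalues_eq rfl μ]
  calc μ * (Finset.univ.filter fun i => hT'.eigenvalues rfl i = μ).card
      = ∑ i with hT'.eigenvalues rfl i = μ, hT'.eigenvalues rfl i := by
        rw [Finset.sum_congr rfl fun i hi => (Finset.mem_filter.mp hi).2, Finset.sum_const,
          nsmul_eq_mul, mul_comm]
    _ ≤ ∑ i, hT'.eigenvalues rfl i :=
        Finset.sum_le_sum_of_subset_of_nonneg (Finset.filter_subset _ _)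
          fun i _ _ => hT.nonneg_eigenvalues rfl i
    _ = _ := by simp

theorem norm_apply_sq_le_trace_div (T : E →ₗ[ℝ] E) {m : ℕ} (hm : 0 < m)
    (h : ∀ μ : ℝ, 0 < μ → HasEigenvalue (adjoint T ∘ₗ T) μ →
      m ≤ finrank ℝ (eigenspace (adjoint T ∘ₗ T) μ)) (v : E) :
    ‖T v‖ ^ 2 ≤ trace ℝ E (adjoint T ∘ₗ T) / m * ‖v‖ ^ 2 := by
  have hS := isPositive_adjoint_comp_self T
  have hm' : (0 : ℝ) < m := by exact_mod_cast hm
  rw [← real_inner_self_eq_norm_sq, ← adjoint_inner_right, ← comp_apply, real_inner_comm]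
  refine hS.isSymmetric.inner_apply_self_le (fun μ hμ => ?_) v
  rcases (eigenvalue_nonneg_of_nonneg hμ hS.re_inner_nonneg_right).eq_or_lt with h0 | hpos
  · rw [← h0]
    exact div_nonneg hS.trace_nonneg hm'.le
  · rw [le_div_iff₀ hm']
    calc μ * m ≤ μ * finrank ℝ (eigenspace (adjoint T ∘ₗ T) μ) := by
          gcongr; exact_mod_cast h μ hpos hμ
      _ ≤ _ := hS.mul_finrank_eigenspace_le_trace μ

end LinearMap

theorem FDRep.hom_comm_apply {k : Type u} {G : Type v} [Field k] [Monoid G] {V W : FDRep k G}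
    (f : V ⟶ W) (g : G) (v : V) : f.hom.hom.hom (V.ρ g v) = W.ρ g (f.hom.hom.hom v) :=
  congrArg (fun φ => φ.hom.hom v) (f.comm g)

namespace Subrepresentation

variable {k : Type u} {G : Type v} {W : Type u} [Field k] [Monoid G] [AddCommGroup W] [Module k W]
  [FiniteDimensional k W] {ρ : Representation k G W}

instance : WellFoundedLT (Subrepresentation ρ) :=
  (show StrictMono (toSubmodule : Subrepresentation ρ → Submodule k W) from
    fun _ _ h => h).wellFoundedLT

theorem simple_of_isAtom {σ : Subrepresentation ρ} (hσ : IsAtom σ) :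
    Simple (FDRep.of σ.toRepresentation) where
  mono_isIso_iff_nonzero {Z} f _ := by
    constructor
    · intro _ hf
      obtain ⟨v, hv, hv0⟩ := Submodule.exists_mem_ne_zero_of_ne_bot
        (fun h => hσ.1 (toSubmodule_injective h))
      subst hf
      have hid : 𝟙 (FDRep.of σ.toRepresentation) = 0 := by
        rw [← IsIso.inv_hom_id (0 : Z ⟶ _), Limits.comp_zero]
      exact hv0 (congrArg Subtype.val (congrArg (fun φ => φ.hom.hom ⟨v, hv⟩) hid))
    · intro hf
      have hinj : Function.Injective f.hom.hom.hom :=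
        (Rep.mono_iff_injective ((forget₂ (FDRep k G) (Rep k G)).map f)).mp inferInstance
      let τ : Subrepresentation ρ :=
        ⟨(LinearMap.range f.hom.hom.hom).map σ.toSubmodule.subtype, by
          rintro g _ ⟨_, ⟨z, rfl⟩, rfl⟩
          exact ⟨_, ⟨_, rfl⟩, congrArg Subtype.val (FDRep.hom_comm_apply f g z)⟩⟩
      have hτσ : τ ≤ σ := by
        rintro _ ⟨w, -, rfl⟩
        exact w.2
      have hτ : τ ≠ ⊥ := by
        intro hτ
        apply hf
        ext z
        have hz : (f.hom.hom.hom z : W) ∈ τ := ⟨_, ⟨z, rfl⟩, rfl⟩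
        rw [hτ] at hz
        exact (Submodule.mem_bot k).mp hz
      have hτeq : τ = σ := (hσ.le_iff.mp hτσ).resolve_left hτ
      have hsurj : Function.Surjective f.hom.hom.hom := by
        intro w
        have hw : (w : W) ∈ τ := by rw [hτeq]; exact w.2
        obtain ⟨_, ⟨z, rfl⟩, hz⟩ := hw
        exact ⟨z, Subtype.ext hz⟩
      exact (ConcreteCategory.isIso_iff_bijective f).mpr ⟨hinj, hsurj⟩

theorem le_finrank_of_forall_simple {M : ℕ}
    (hM : ∀ V : FDRep k G, Simple V → (∃ g : G, V.ρ g ≠ 1) → M ≤ finrank k V)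
    {σ : Subrepresentation ρ} (hσ : σ ≠ ⊥) (hfix : ∀ v ∈ σ, (∀ g, ρ g v = v) → v = 0) :
    M ≤ finrank k σ.toSubmodule := by
  obtain ⟨τ, hτ, hτσ⟩ := (eq_bot_or_exists_atom_le σ).resolve_left hσ
  obtain ⟨v, hv, hv0⟩ := Submodule.exists_mem_ne_zero_of_ne_bot
    (fun h => hτ.1 (toSubmodule_injective h))
  obtain ⟨g, hg⟩ : ∃ g, ρ g v ≠ v := by
    by_contra! h
    exact hv0 (hfix v (hτσ hv) h)
  calc M ≤ finrank k (FDRep.of τ.toRepresentation) :=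
        hM _ (simple_of_isAtom hτ)
          ⟨g, fun h => hg (congrArg Subtype.val (LinearMap.congr_fun h ⟨v, hv⟩))⟩
    _ ≤ finrank k σ.toSubmodule := Submodule.finrank_mono hτσ

end Subrepresentation

theorem l2Norm_eq_norm {G : Type*} [Fintype G] (f : G → ℝ) : l2Norm f = ‖WithLp.toLp 2 f‖ := by
  simp [l2Norm, EuclideanSpace.norm_eq]

section

variable {G : Type*} [Group G]

noncomputable def rightRegular : Representation ℝ G (EuclideanSpace ℝ G) where
  toFun s :=
    { toFun := fun v => WithLp.toLp 2 fun x => v (x * s)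
      map_add' := fun _ _ => rfl
      map_smul' := fun _ _ => rfl }
  map_one' := by ext v x; simp
  map_mul' s t := by ext v x; exact congrArg v (mul_assoc x s t).symm

theorem rightRegular_apply (s : G) (v : EuclideanSpace ℝ G) (x : G) :
    rightRegular s v x = v (x * s) := rfl

variable [Fintype G]

theorem conv_sub_const_sub_const {X Y : G → ℝ} (hX : ∑ g, X g = 1) (hY : ∑ g, Y g = 1) {c : ℝ}
    (hc : Fintype.card G * c = 1) :
    conv (X - fun _ => c) (Y - fun _ => c) = conv X Y - fun _ => c := by
  funext x
  have hY' : ∑ h : G, Y (h⁻¹ * x) = 1 := by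
    rw [← hY]; exact Fintype.sum_equiv ((Equiv.inv G).trans (Equiv.mulRight x)) _ _ fun _ => rfl
  simp only [conv, Pi.sub_apply, mul_sub, sub_mul, Finset.sum_sub_distrib, ← Finset.mul_sum,
    ← Finset.sum_mul, hX, hY', Finset.sum_const, Finset.card_univ, nsmul_eq_mul]
  linear_combination c * hc

noncomputable def convLeft (f : G → ℝ) : EuclideanSpace ℝ G →ₗ[ℝ] EuclideanSpace ℝ G where
  toFun v := WithLp.toLp 2 (conv f v)
  map_add' v w := by ext x; simp [conv, mul_add, Finset.sum_add_distrib]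
  map_smul' c v := by ext x; simp [conv, Finset.mul_sum, mul_left_comm]

theorem convLeft_apply (f : G → ℝ) (v : EuclideanSpace ℝ G) (x : G) :
    convLeft f v x = ∑ h, f h * v (h⁻¹ * x) := rfl

theorem convLeft_comp_rightRegular (f : G → ℝ) (s : G) :
    convLeft f ∘ₗ rightRegular s = rightRegular s ∘ₗ convLeft f := by
  ext v x
  simp [convLeft_apply, rightRegular_apply, mul_assoc]

theorem adjoint_convLeft (f : G → ℝ) : adjoint (convLeft f) = convLeft fun h => f h⁻¹ := by
  symm
  rw [eq_adjoint_iff]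
  intro v w
  simp only [PiLp.inner_apply, convLeft_apply, RCLike.inner_apply, conj_trivial, Finset.sum_mul,
    Finset.mul_sum]
  calc ∑ x, ∑ y, w x * (f y⁻¹ * v (y⁻¹ * x)) = ∑ y, ∑ x, w x * (f y⁻¹ * v (y⁻¹ * x)) :=
        Finset.sum_comm
    _ = ∑ y, ∑ z, w (y * z) * (f y⁻¹ * v z) := by
        refine Finset.sum_congr rfl fun y _ => ?_
        rw [← Equiv.sum_comp (Equiv.mulLeft y)]
        simp only [Equiv.coe_mulLeft, inv_mul_cancel_left]
    _ = ∑ z, ∑ y, w (y * z) * (f y⁻¹ * v z) := Finset.sum_comm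
    _ = ∑ z, ∑ i, f i * w (i⁻¹ * z) * v z := by
        refine Finset.sum_congr rfl fun z _ => ?_
        rw [← Equiv.sum_comp (Equiv.inv G)]
        simp only [Equiv.inv_apply, inv_inv]
        exact Finset.sum_congr rfl fun _ _ => by ring

theorem convLeft_single [DecidableEq G] (f : G → ℝ) (y x : G) :
    convLeft f (EuclideanSpace.single y 1) x = f (x * y⁻¹) := by
  rw [convLeft_apply, Finset.sum_eq_single (x * y⁻¹)]
  · simp
  · intro h _ hh
    rw [PiLp.single_apply, if_neg, mul_zero]
    rintro rfl
    exact hh (by group)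
  · simp

theorem trace_adjoint_comp_convLeft (f : G → ℝ) :
    trace ℝ _ (adjoint (convLeft f) ∘ₗ convLeft f) = Fintype.card G * ∑ x, f x ^ 2 := by
  classical
  rw [trace_eq_sum_inner _ (EuclideanSpace.basisFun G ℝ)]
  simp only [LinearMap.comp_apply, adjoint_inner_right, real_inner_self_eq_norm_sq,
    EuclideanSpace.basisFun_apply, EuclideanSpace.real_norm_sq_eq, convLeft_single]
  have hshift (y : G) : ∑ x, f (x * y⁻¹) ^ 2 = ∑ x, f x ^ 2 :=
    Equiv.sum_comp (Equiv.mulRight y⁻¹) fun x => f x ^ 2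
  simp [hshift]

theorem convLeft_eq_zero_of_forall_rightRegular_eq {f : G → ℝ} (hf : ∑ x, f x = 0)
    {v : EuclideanSpace ℝ G} (hv : ∀ s, rightRegular s v = v) : convLeft f v = 0 := by
  have hconst (x : G) : v x = v 1 := by
    simpa [rightRegular_apply] using congrArg (fun w : EuclideanSpace ℝ G => w 1) (hv x)
  ext x
  simp [convLeft_apply, hconst, ← Finset.sum_mul, hf]

end

theorem le_finrank_eigenspace_adjoint_comp_convLeft {G : Type} [Group G] [Fintype G] {M : ℕ}
    (hM : ∀ V : FDRep ℝ G, Simple V → (∃ g : G, V.ρ g ≠ 1) → M ≤ finrank ℝ V)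
    {f : G → ℝ} (hf : ∑ x, f x = 0) {μ : ℝ} (hμ : μ ≠ 0)
    (hμ' : HasEigenvalue (adjoint (convLeft f) ∘ₗ convLeft f) μ) :
    M ≤ finrank ℝ (eigenspace (adjoint (convLeft f) ∘ₗ convLeft f) μ) := by
  set S := adjoint (convLeft f) ∘ₗ convLeft f
  have hcomm (s : G) : Commute S (rightRegular s) := by
    change (adjoint (convLeft f) ∘ₗ convLeft f) ∘ₗ rightRegular s =
      rightRegular s ∘ₗ (adjoint (convLeft f) ∘ₗ convLeft f)
    rw [adjoint_convLeft, comp_assoc, convLeft_comp_rightRegular, ← comp_assoc,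
      convLeft_comp_rightRegular, comp_assoc]
  let σ : Subrepresentation (rightRegular (G := G)) :=
    ⟨eigenspace S μ, fun s => mapsTo_genEigenspace_of_comm (hcomm s) μ 1⟩
  refine Subrepresentation.le_finrank_of_forall_simple hM (σ := σ)
    (fun h => hμ' (congrArg Subrepresentation.toSubmodule h)) fun v hv hfix => ?_
  have hSv : S v = μ • v := mem_eigenspace_iff.mp hv
  rw [LinearMap.comp_apply, convLeft_eq_zero_of_forall_rightRegular_eq hf hfix, map_zero] at hSv
  exact (smul_eq_zero.mp hSv.symm).resolve_left hμ

theorem norm_convLeft_le {G : Type} [Group G] [Fintype G] {M : ℕ} (hMpos : 0 < M)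
    (hM : ∀ V : FDRep ℝ G, Simple V → (∃ g : G, V.ρ g ≠ 1) → M ≤ finrank ℝ V)
    {f : G → ℝ} (hf : ∑ x, f x = 0) (v : EuclideanSpace ℝ G) :
    ‖convLeft f v‖ ≤ √(Fintype.card G / M) * ‖WithLp.toLp 2 f‖ * ‖v‖ := by
  have h := norm_apply_sq_le_trace_div (convLeft f) hMpos
    (fun μ hμ hμ' => le_finrank_eigenspace_adjoint_comp_convLeft hM hf hμ.ne' hμ') v
  rw [trace_adjoint_comp_convLeft] at h
  refine (pow_le_pow_iff_left₀ (norm_nonneg _) (by positivity) two_ne_zero).mp ?_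
  rw [mul_pow, mul_pow, Real.sq_sqrt (by positivity),
    EuclideanSpace.real_norm_sq_eq (WithLp.toLp 2 f)]
  exact h.trans_eq (by ring)

theorem stmt_10_general {G : Type} [Group G] [Fintype G]
    (N : ℕ) (hN : N = Fintype.card G)
    (M : ℕ)
    (hM_le : ∀ V : FDRep ℝ G, Simple V → (∃ g : G, V.ρ g ≠ 1) → M ≤ Module.finrank ℝ V)
    (hM_mem : ∃ V : FDRep ℝ G, Simple V ∧ (∃ g : G, V.ρ g ≠ 1) ∧ Module.finrank ℝ V = M)
    (X Y : G → ℝ) (hX1 : ∑ g, X g = 1)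
    (hY1 : ∑ g, Y g = 1)
    (U : G → ℝ) (hU : ∀ g, U g = 1 / N) :
    l2Norm (conv X Y - U) ≤
      Real.sqrt ((N : ℝ) / M) * l2Norm (X - U) * l2Norm (Y - U) := by
  have hMpos : 0 < M := by
    obtain ⟨V, -, ⟨g, hg⟩, rfl⟩ := hM_mem
    refine Nat.pos_of_ne_zero fun h0 => hg ?_
    have : Subsingleton V := finrank_zero_iff.mp h0
    exact LinearMap.ext fun _ => Subsingleton.elim _ _
  set c : ℝ := 1 / N
  obtain rfl : U = fun _ => c := funext hU
  have hc : Fintype.card G * c = 1 := by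
    rw [← hN]
    exact mul_one_div_cancel (Nat.cast_ne_zero.mpr (hN ▸ Fintype.card_ne_zero))
  have hf : ∑ x, (X x - c) = 0 := by
    rw [Finset.sum_sub_distrib, hX1, Finset.sum_const, Finset.card_univ, nsmul_eq_mul, hc, sub_self]
  rw [← conv_sub_const_sub_const hX1 hY1 hc, l2Norm_eq_norm, l2Norm_eq_norm, l2Norm_eq_norm, hN]
  exact norm_convLeft_le hMpos hM_le (f := X - fun _ => c) hf (WithLp.toLp 2 (Y - fun _ => c))

theorem stmt_10 {G : Type} [Group G] [Fintype G]
    (N : ℕ) (hN : N = Fintype.card G)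
    (M : ℕ)
    (hM_le : ∀ V : FDRep ℝ G, Simple V → (∃ g : G, V.ρ g ≠ 1) → M ≤ Module.finrank ℝ V)
    (hM_mem : ∃ V : FDRep ℝ G, Simple V ∧ (∃ g : G, V.ρ g ≠ 1) ∧ Module.finrank ℝ V = M)
    (X Y : G → ℝ) (hX0 : ∀ g, 0 ≤ X g) (hX1 : ∑ g, X g = 1)
    (hY0 : ∀ g, 0 ≤ Y g) (hY1 : ∑ g, Y g = 1)
    (U : G → ℝ) (hU : ∀ g, U g = 1 / N) :
    l2Norm (conv X Y - U) ≤
      Real.sqrt ((N : ℝ) / M) * l2Norm (X - U) * l2Norm (Y - U) :=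
  stmt_10_general N hN M hM_le hM_mem X Y hX1 hY1 U hU
end

section
/- Let F be a finite field, G = SL₂(F), and A ⊆ G a generating set of G. Then A^{[3]}, the set of words of length at most 3 in A ∪ A⁻¹ ∪ {1}, contains at least |A|/4 elements of nonzero trace. -/
/-
Put `B = A ∪ A⁻¹ ∪ {1}`. As `B` generates the nonabelian group `SL₂(F)`, it contains two
noncommuting matrices, which together with `1` are linearly independent, so `dim span B ≥ 3`.
If `span (B * B)` were a proper subspace of `M₂(F)`, then `span B ≤ span (B * B)` would be an
equality, so `span B` would be a unital subalgebra containing `B`; being closed under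
`g⁻¹ = tr g • 1 - g`, it would contain `SL₂(F)`, which spans `M₂(F)`. Hence some `P ⊆ B * B`
with `|P| ≤ 4` spans `M₂(F)`. The trace form is nondegenerate, so each `a ∈ A` has
`tr (a * p) ≠ 0` for some `p ∈ P`; thus `A ⊆ V * P⁻¹`, where `V` is the set of elements of `B³`
of nonzero trace, and `|A| ≤ 4 |V|`.
-/

open Pointwise Matrix Submodule Module
open scoped MatrixGroups

theorem Subgroup.exists_not_commute_of_closure_eq_top {G : Type*} [Group G] {s : Set G}
    (hs : Subgroup.closure s = ⊤) {x y : G} (hxy : ¬Commute x y) :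
    ∃ g ∈ s, ∃ h ∈ s, ¬Commute g h := by
  by_contra! hcomm
  have hcent := hs ▸ Subgroup.closure_le_centralizer_centralizer s
  exact hxy <| Set.centralizer_centralizer_comm_of_comm hcomm
    x (hcent (Subgroup.mem_top x)) y (hcent (Subgroup.mem_top y))

theorem linearIndependent_one_of_not_commute {K A : Type*} [Field K] [Ring A] [Algebra K A]
    {x y : A} (hxy : ¬Commute x y) : LinearIndependent K ![1, x, y] := by
  rw [Fintype.linearIndependent_iff]
  intro c hc
  simp only [Fin.sum_univ_three, Matrix.cons_val_zero, Matrix.cons_val_one,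
    Matrix.cons_val_two, Matrix.head_cons, Matrix.tail_cons] at hc
  have h2 : c 2 = 0 := by
    by_contra h2
    have hy : y = (-(c 2)⁻¹) • (c 0 • 1 + c 1 • x) := by
      rw [neg_smul, eq_neg_iff_add_eq_zero, ← smul_right_inj h2, smul_add, smul_smul,
        mul_inv_cancel₀ h2, one_smul, add_comm, hc, smul_zero]
    exact hxy (hy ▸ (((Commute.one_right x).smul_right _).add_right
      ((Commute.refl x).smul_right _)).smul_right _)
  have h1 : c 1 = 0 := by
    by_contra h1
    have hx : x = (-(c 1)⁻¹) • c 0 • 1 := by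
      rw [h2, zero_smul, add_zero] at hc
      rw [neg_smul, eq_neg_iff_add_eq_zero, ← smul_right_inj h1, smul_add, smul_smul,
        mul_inv_cancel₀ h1, one_smul, add_comm, hc, smul_zero]
    exact hxy (hx ▸ ((Commute.one_left y).smul_left _).smul_left _)
  have : Nontrivial A := nontrivial_of_ne _ _ hxy
  have h0 : c 0 = 0 := by simpa [h1, h2] using hc
  intro i
  fin_cases i <;> assumption

theorem Matrix.exists_mem_trace_mul_ne_zero {R n : Type*} [CommRing R] [Fintype n]
    {a : Matrix n n R} (ha : a ≠ 0) {S : Set (Matrix n n R)} (hS : span R S = ⊤) :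
    ∃ m ∈ S, trace (a * m) ≠ 0 := by
  by_contra! h
  have hzero : (traceLinearMap n R R).comp (LinearMap.mulLeft R a) = 0 :=
    LinearMap.ext_on hS fun m hm => h m hm
  exact ha <| ext_iff_trace_mul_right.mpr fun x => by
    simpa using LinearMap.congr_fun hzero x

theorem Finset.exists_subset_card_le_finrank_of_span_image_eq_top {K V ι : Type*}
    [DivisionRing K] [AddCommGroup V] [Module K V] [FiniteDimensional K V]
    {f : ι → V} (hf : Function.Injective f) (s : Finset ι) (hs : span K (f '' s) = ⊤) :
    ∃ t ⊆ s, t.card ≤ finrank K V ∧ span K (f '' t) = ⊤ := by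
  classical
  obtain ⟨b, hbs, hspan, hli⟩ := exists_linearIndependent K (f '' s)
  set t := s.filter (fun i => f i ∈ b)
  have himage : ((t.image f : Finset V) : Set V) = b := by
    ext v
    simp only [Finset.coe_image, Finset.coe_filter, t]
    constructor
    · rintro ⟨i, ⟨-, hi⟩, rfl⟩
      exact hi
    · intro hv
      obtain ⟨i, hi, rfl⟩ := hbs hv
      exact ⟨i, ⟨hi, hv⟩, rfl⟩
  refine ⟨t, Finset.filter_subset _ _, ?_, ?_⟩
  · rw [← Finset.card_image_of_injective t hf]
    exact (himage ▸ hli).finset_card_le_finrank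
  · rwa [← Finset.coe_image, himage, hspan]

namespace Matrix.SpecialLinearGroup

local notation "M₂(" R ")" => Matrix (Fin 2) (Fin 2) R

variable {R : Type*} [CommRing R]

theorem coe_ne_zero {n : Type*} [Fintype n] [DecidableEq n] [Nonempty n] [Nontrivial R]
    (g : SpecialLinearGroup n R) : (g : Matrix n n R) ≠ 0 := fun h =>
  g.det_ne_zero (by simp [h])

theorem coe_inv_fin_two (g : SL(2, R)) :
    ((g⁻¹ : SL(2, R)) : M₂(R)) = trace (g : M₂(R)) • 1 - g := by
  rw [coe_inv, adjugate_fin_two]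
  ext i j
  fin_cases i <;> fin_cases j <;> simp [trace_fin_two]

theorem span_range_coe_fin_two : span R (Set.range ((↑) : SL(2, R) → M₂(R))) = ⊤ := by
  let u : SL(2, R) := ⟨!![1, 1; 0, 1], by simp [det_fin_two_of]⟩
  let l : SL(2, R) := ⟨!![1, 0; 1, 1], by simp [det_fin_two_of]⟩
  have hmem (g : SL(2, R)) : (g : M₂(R)) ∈ span R (Set.range ((↑) : SL(2, R) → M₂(R))) :=
    subset_span ⟨g, rfl⟩
  refine eq_top_iff.mpr fun m _ => ?_
  -- `u - 1` and `l - 1` are the off-diagonal matrix units and `u * l - u - l + 1` is `E₀₀`.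
  have hm : m = (m 0 0 - m 0 1 - m 1 0) • ((1 : SL(2, R)) : M₂(R))
      + (m 0 1 - m 0 0 + m 1 1) • (u : M₂(R)) + (m 1 0 - m 0 0 + m 1 1) • (l : M₂(R))
      + (m 0 0 - m 1 1) • ((u : M₂(R)) * (l : M₂(R))) := by
    ext i j
    fin_cases i <;> fin_cases j <;> simp [u, l] <;> ring
  rw [hm, ← coe_mul]
  exact add_mem (add_mem (add_mem (smul_mem _ _ (hmem _)) (smul_mem _ _ (hmem _)))
    (smul_mem _ _ (hmem _))) (smul_mem _ _ (hmem _))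

theorem eq_top_of_coe_mem_subalgebra (S : Subalgebra R M₂(R)) {s : Set SL(2, R)}
    (hs : Subgroup.closure s = ⊤) (hsS : ∀ g ∈ s, (g : M₂(R)) ∈ S) : S = ⊤ := by
  let H : Subgroup SL(2, R) :=
    { carrier := {g | (g : M₂(R)) ∈ S}
      mul_mem' := fun hg hh => by simpa using S.mul_mem hg hh
      one_mem' := by simp
      inv_mem' := fun {g} hg => by
        simp only [Set.mem_ofPred_eq, coe_inv_fin_two]
        exact S.sub_mem (S.smul_mem S.one_mem _) hg }
  have hH : ∀ g : SL(2, R), (g : M₂(R)) ∈ S := fun g =>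
    (hs ▸ (Subgroup.closure_le H).mpr hsS) (Subgroup.mem_top g)
  rw [← Algebra.toSubmodule_eq_top, eq_top_iff, ← span_range_coe_fin_two, span_le]
  rintro _ ⟨g, rfl⟩
  exact hH g

theorem exists_not_commute_coe_of_closure_eq_top [Nontrivial R] {s : Set SL(2, R)}
    (hs : Subgroup.closure s = ⊤) : ∃ g ∈ s, ∃ h ∈ s, ¬Commute (g : M₂(R)) h := by
  let u : SL(2, R) := ⟨!![1, 1; 0, 1], by simp [det_fin_two_of]⟩
  let l : SL(2, R) := ⟨!![1, 0; 1, 1], by simp [det_fin_two_of]⟩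
  have hul : ¬Commute u l := fun h => by
    have : ((u : M₂(R)) * l) 0 0 = ((l : M₂(R)) * u) 0 0 := by
      rw [← coe_mul, ← coe_mul, h.eq]
    simp [u, l] at this
  obtain ⟨g, hg, h, hh, hgh⟩ := Subgroup.exists_not_commute_of_closure_eq_top hs hul
  exact ⟨g, hg, h, hh, fun hc => hgh (Subtype.ext hc)⟩

theorem span_image_coe_mul_self_eq_top {K : Type*} [Field K] {s : Set SL(2, K)} (h1 : 1 ∈ s)
    (hs : Subgroup.closure s = ⊤) :
    span K ((fun g : SL(2, K) => (g : M₂(K))) '' (s * s)) = ⊤ := by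
  set W := span K ((fun g : SL(2, K) => (g : M₂(K))) '' s)
  have himage : (fun g : SL(2, K) => (g : M₂(K))) '' (s * s) =
      (fun g : SL(2, K) => (g : M₂(K))) '' s * (fun g : SL(2, K) => (g : M₂(K))) '' s :=
    Set.image_mul coeMonoidHom
  rw [himage, ← span_mul_span]
  by_contra hne
  have h1W : (1 : M₂(K)) ∈ W := subset_span ⟨1, h1, coe_one⟩
  have hle : W ≤ W * W := fun x hx => mul_one x ▸ mul_mem_mul hx h1W
  have h3 : 3 ≤ finrank K W := by
    obtain ⟨g, hg, h, hh, hgh⟩ := exists_not_commute_coe_of_closure_eq_top hs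
    have hind := linearIndependent_one_of_not_commute (K := K) hgh
    rw [← show finrank K (span K (Set.range _)) = 3 from finrank_span_eq_card hind]
    refine Submodule.finrank_mono (span_le.mpr ?_)
    rintro _ ⟨i, rfl⟩
    fin_cases i
    exacts [h1W, subset_span ⟨g, hg, rfl⟩, subset_span ⟨h, hh, rfl⟩]
  have h4 : finrank K ↥(W * W) < 4 := (finrank_lt hne).trans_eq (by simp [finrank_matrix])
  have hW : W = W * W := Submodule.eq_of_le_of_finrank_le hle (by omega)
  have hWtop := eq_top_of_coe_mem_subalgebra
    (W.toSubalgebra h1W fun x y hx hy => hW ▸ mul_mem_mul hx hy) hs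
    fun g hg => subset_span ⟨g, hg, rfl⟩
  exact hne (hW ▸ congrArg Subalgebra.toSubmodule hWtop)

end Matrix.SpecialLinearGroup

theorem stmt_14_general {F : Type*} [Field F] [DecidableEq F]
    [DecidableEq (Matrix.SpecialLinearGroup (Fin 2) F)]
    (A : Finset (Matrix.SpecialLinearGroup (Fin 2) F))
    (hgen : Subgroup.closure (A : Set (Matrix.SpecialLinearGroup (Fin 2) F)) = ⊤) :
    (A.card : ℝ) / 4 ≤
      (((A ∪ A⁻¹ ∪ {1}) * (A ∪ A⁻¹ ∪ {1}) * (A ∪ A⁻¹ ∪ {1})).filter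
        (fun g => Matrix.trace g.val ≠ 0)).card := by
  set B := A ∪ A⁻¹ ∪ {1}
  set V := (B * B * B).filter (fun g => Matrix.trace g.val ≠ 0)
  have hAB : A ⊆ B := Finset.subset_union_left.trans Finset.subset_union_left
  have hB : Subgroup.closure (B : Set (Matrix.SpecialLinearGroup (Fin 2) F)) = ⊤ :=
    top_unique (hgen ▸ Subgroup.closure_mono (by exact_mod_cast hAB))
  obtain ⟨P, hPB, hP4, hP⟩ := (B * B).exists_subset_card_le_finrank_of_span_image_eq_top
    (f := fun g : SL(2, F) => (g : Matrix (Fin 2) (Fin 2) F)) Subtype.val_injective (by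
      rw [Finset.coe_mul]
      exact SpecialLinearGroup.span_image_coe_mul_self_eq_top (by simp [B]) hB)
  have hAVP : A ⊆ V * P⁻¹ := by
    intro a ha
    obtain ⟨_, ⟨p, hp, rfl⟩, htr⟩ := exists_mem_trace_mul_ne_zero a.coe_ne_zero hP
    refine Finset.mem_mul.mpr ⟨a * p, Finset.mem_filter.mpr ⟨?_, htr⟩, p⁻¹,
      Finset.inv_mem_inv hp, mul_inv_cancel_right a p⟩
    rw [mul_assoc]
    exact Finset.mul_mem_mul (hAB ha) (hPB hp)
  have hcard : A.card ≤ V.card * 4 := calc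
    A.card ≤ (V * P⁻¹).card := Finset.card_le_card hAVP
    _ ≤ V.card * P.card := Finset.card_inv P ▸ Finset.card_mul_le
    _ ≤ V.card * 4 := by simpa [finrank_matrix] using Nat.mul_le_mul_left V.card hP4
  rw [div_le_iff₀ four_pos]
  exact_mod_cast hcard

theorem stmt_14 {F : Type*} [Field F] [Fintype F] [DecidableEq F]
    [DecidableEq (Matrix.SpecialLinearGroup (Fin 2) F)]
    (A : Finset (Matrix.SpecialLinearGroup (Fin 2) F))
    (hgen : Subgroup.closure (A : Set (Matrix.SpecialLinearGroup (Fin 2) F)) = ⊤) :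
    (A.card : ℝ) / 4 ≤
      (((A ∪ A⁻¹ ∪ {1}) * (A ∪ A⁻¹ ∪ {1}) * (A ∪ A⁻¹ ∪ {1})).filter
        (fun g => Matrix.trace g.val ≠ 0)).card :=
  stmt_14_general A hgen
end

section
/- Let F be a finite field, G = SL₂(F), A ⊆ G with ⟨A⟩ = G, and E a proper subfield of F. If some element of A has trace outside E, then the set A^{[4]} of words of length at most 4 in A ∪ A⁻¹ ∪ {1} contains at least |A|/12 elements whose trace lies outside E. -/
/-!
Fix `b ∈ A` with `tr b ∉ E`. In `SL₂` one has `tr (g b) + tr (g b⁻¹) = tr g · tr b`, so whenever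
`tr g ∈ E` is nonzero, `g b` or `g b⁻¹` has trace outside `E`; applying this to `g` or to `g b`,
some `g v` with `v ∈ {1, b, b⁻¹, b²}` escapes `E` unless `tr g = tr (g b) = 0`. The latter means
`b g b = g`, since trace-zero elements of `SL₂` square to `-1`. If two such elements `a`, `a₀` had
`a a₀` of the same kind, then `b² = 1` and `tr b = ±2 ∈ E`. Hence, for one fixed `a₀`, every
`a ∈ A` becomes an escaping word of length at most `4` after right multiplication by one of the
eight words `u v` with `u ∈ {1, a₀}`, and so `|A| ≤ 8 · |A^{[4]} ∖ E|`.
-/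

open Pointwise Finset

theorem Finset.card_le_card_mul_card_of_forall_exists_mul_mem {G : Type*} [Group G]
    [DecidableEq G] {A S W : Finset G} (h : ∀ a ∈ A, ∃ w ∈ W, a * w ∈ S) :
    #A ≤ #S * #W :=
  calc #A ≤ #(S * W⁻¹) := card_le_card fun a ha => by
        obtain ⟨w, hw, haw⟩ := h a ha
        simpa using mul_mem_mul haw (inv_mem_inv hw)
    _ ≤ #S * #W⁻¹ := card_mul_le
    _ = #S * #W := by rw [card_inv]

theorem mul_self_eq_one_of_mul_mul_eq_self {G : Type*} [Group G] {b x y : G}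
    (hx : b * x * b = x) (hy : b * y * b = y) (hxy : b * (x * y) * b = x * y) : b * b = 1 := by
  have h : x * (b⁻¹ * b⁻¹) * y = x * 1 * y :=
    calc x * (b⁻¹ * b⁻¹) * y = (b * x * b) * (b⁻¹ * b⁻¹) * (b * y * b) := by rw [hx, hy]
      _ = b * (x * y) * b := by group
      _ = x * 1 * y := by rw [hxy, mul_one]
  have hinv : b⁻¹ * b⁻¹ = 1 := mul_left_cancel (mul_right_cancel h)
  calc b * b = (b⁻¹ * b⁻¹)⁻¹ := by rw [mul_inv_rev, inv_inv]
    _ = 1 := by rw [hinv, inv_one]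

open Matrix
open scoped MatrixGroups

theorem Matrix.adjugate_fin_two_eq_trace_smul_sub {R : Type*} [CommRing R]
    (A : Matrix (Fin 2) (Fin 2) R) : adjugate A = trace A • (1 : Matrix (Fin 2) (Fin 2) R) - A := by
  rw [adjugate_fin_two, trace_fin_two]
  ext i j
  fin_cases i <;> fin_cases j <;> simp

theorem Matrix.trace_mul_add_trace_mul_adjugate_fin_two {R : Type*} [CommRing R]
    (A B : Matrix (Fin 2) (Fin 2) R) :
    trace (A * B) + trace (A * adjugate B) = trace A * trace B := by
  rw [adjugate_fin_two_eq_trace_smul_sub, mul_sub, mul_smul_comm, mul_one, trace_sub, trace_smul,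
    smul_eq_mul]
  ring

namespace Matrix.SpecialLinearGroup

section CommRing

variable {R : Type*} [CommRing R]

theorem trace_mul_add_trace_mul_inv (g h : SL(2, R)) :
    trace (g * h).val + trace (g * h⁻¹).val = trace g.val * trace h.val := by
  rw [coe_mul, coe_mul, coe_inv]
  exact trace_mul_add_trace_mul_adjugate_fin_two _ _

theorem coe_mul_self_of_trace_eq_zero {g : SL(2, R)} (hg : trace g.val = 0) :
    g.val * g.val = -1 := by
  have hadj : adjugate g.val = -g.val := by
    rw [adjugate_fin_two_eq_trace_smul_sub, hg, zero_smul, zero_sub]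
  rw [← neg_neg (g.val * g.val), ← mul_neg, ← hadj, mul_adjugate, g.prop, one_smul]

theorem mul_mul_eq_self_of_trace_eq_zero {g b : SL(2, R)} (hg : trace g.val = 0)
    (hgb : trace (g * b).val = 0) : b * g * b = g := by
  have hsq : (g * b) * (g * b) = g * g := Subtype.ext <| by
    rw [coe_mul (g * b), coe_mul g g, coe_mul_self_of_trace_eq_zero hg,
      coe_mul_self_of_trace_eq_zero hgb]
  exact mul_left_cancel (a := g) (by rw [← hsq]; group)

theorem mul_self_eq_one_of_trace_eq_zero {x y b : SL(2, R)}
    (hx : trace x.val = 0) (hxb : trace (x * b).val = 0)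
    (hy : trace y.val = 0) (hyb : trace (y * b).val = 0)
    (hxy : trace (x * y).val = 0) (hxyb : trace (x * y * b).val = 0) : b * b = 1 :=
  mul_self_eq_one_of_mul_mul_eq_self (mul_mul_eq_self_of_trace_eq_zero hx hxb)
    (mul_mul_eq_self_of_trace_eq_zero hy hyb) (mul_mul_eq_self_of_trace_eq_zero hxy hxyb)

end CommRing

section Field

variable {K : Type*} [Field K] (E : Subfield K) {b : SL(2, K)}

theorem trace_mem_of_mul_self_eq_one (hb : b * b = 1) : trace b.val ∈ E := by
  have h := trace_mul_add_trace_mul_inv b b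
  rw [hb, mul_inv_cancel, coe_one, trace_one, Fintype.card_fin] at h
  have h2 : (2 : K) ∈ E := ofNat_mem E 2
  rcases mul_eq_zero.1 (show (trace b.val - 2) * (trace b.val + 2) = 0 by
    push_cast at h; linear_combination -h) with h | h
  · rwa [sub_eq_zero.1 h]
  · rw [eq_neg_of_add_eq_zero_left h]
    exact E.neg_mem h2

variable {E}

theorem trace_mul_not_mem_or_trace_mul_inv_not_mem (hb : trace b.val ∉ E) {x : SL(2, K)}
    (hx : trace x.val ∈ E) (hx0 : trace x.val ≠ 0) :
    trace (x * b).val ∉ E ∨ trace (x * b⁻¹).val ∉ E := by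
  by_contra! h
  have hsum := E.add_mem h.1 h.2
  rw [trace_mul_add_trace_mul_inv] at hsum
  exact hb (by simpa [hx0] using E.mul_mem (E.inv_mem hx) hsum)

variable [DecidableEq SL(2, K)]

theorem exists_trace_mul_not_mem (hb : trace b.val ∉ E) {x : SL(2, K)}
    (hx : trace x.val ≠ 0 ∨ trace (x * b).val ≠ 0) :
    ∃ v ∈ ({1, b, b⁻¹, b * b} : Finset SL(2, K)), trace (x * v).val ∉ E := by
  by_cases hxE : trace x.val ∉ E
  · exact ⟨1, by simp, by simpa using hxE⟩
  by_cases hxbE : trace (x * b).val ∉ E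
  · exact ⟨b, by simp, hxbE⟩
  rw [not_not] at hxE hxbE
  rcases hx with hx | hx
  · rcases trace_mul_not_mem_or_trace_mul_inv_not_mem hb hxE hx with h | h
    · exact ⟨b, by simp, h⟩
    · exact ⟨b⁻¹, by simp, h⟩
  · rcases trace_mul_not_mem_or_trace_mul_inv_not_mem hb hxbE hx with h | h
    · exact ⟨b * b, by simp, by rwa [← mul_assoc]⟩
    · exact absurd hxE (by simpa using h)

theorem exists_forall_exists_trace_mul_not_mem (hb : trace b.val ∉ E) (A : Set SL(2, K)) :
    ∃ a₀ ∈ insert 1 A, ∀ a ∈ A,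
      ∃ w ∈ ({1, a₀} * {1, b, b⁻¹, b * b} : Finset SL(2, K)), trace (a * w).val ∉ E := by
  suffices ∃ a₀ ∈ insert 1 A, ∀ a ∈ A,
      ∃ u ∈ ({1, a₀} : Finset SL(2, K)), trace (a * u).val ≠ 0 ∨ trace (a * u * b).val ≠ 0 by
    obtain ⟨a₀, ha₀, h⟩ := this
    refine ⟨a₀, ha₀, fun a ha => ?_⟩
    obtain ⟨u, hu, hne⟩ := h a ha
    obtain ⟨v, hv, hesc⟩ := exists_trace_mul_not_mem hb hne
    exact ⟨u * v, mul_mem_mul hu hv, by rwa [← mul_assoc]⟩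
  by_cases h₀ : ∃ a₀ ∈ A, trace a₀.val = 0 ∧ trace (a₀ * b).val = 0
  · obtain ⟨a₀, ha₀, h0, h0b⟩ := h₀
    refine ⟨a₀, Set.mem_insert_of_mem _ ha₀, fun a _ => ?_⟩
    by_cases ha : trace a.val = 0 ∧ trace (a * b).val = 0
    · refine ⟨a₀, by simp, not_and_or.1 fun h => hb ?_⟩
      exact trace_mem_of_mul_self_eq_one E
        (mul_self_eq_one_of_trace_eq_zero ha.1 ha.2 h0 h0b h.1 h.2)
    · exact ⟨1, by simp, by simpa using not_and_or.1 ha⟩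
  · refine ⟨1, Set.mem_insert _ _, fun a ha => ⟨1, by simp, ?_⟩⟩
    simpa using not_and_or.1 fun h => h₀ ⟨a, ha, h⟩

end Field

end Matrix.SpecialLinearGroup

theorem stmt_15_general {F : Type*} [Field F]
    [DecidableEq (Matrix.SpecialLinearGroup (Fin 2) F)]
    (A : Finset (Matrix.SpecialLinearGroup (Fin 2) F))
    (E : Subfield F) [DecidablePred (· ∈ E)]
    (hesc : ∃ a ∈ A, Matrix.trace a.val ∉ E) :
    (A.card : ℝ) / 12 ≤
      (((A ∪ A⁻¹ ∪ {1}) * (A ∪ A⁻¹ ∪ {1}) * (A ∪ A⁻¹ ∪ {1}) * (A ∪ A⁻¹ ∪ {1})).filter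
        (fun g : Matrix.SpecialLinearGroup (Fin 2) F => Matrix.trace g.val ∉ E)).card := by
  obtain ⟨b, hbA, hbE⟩ := hesc
  set T := A ∪ A⁻¹ ∪ {1}
  set S := (T * T * T * T).filter (fun g : SL(2, F) => trace g.val ∉ E)
  obtain ⟨a₀, ha₀, hesc⟩ := SpecialLinearGroup.exists_forall_exists_trace_mul_not_mem hbE (A : Set _)
  set W : Finset SL(2, F) := {1, a₀} * {1, b, b⁻¹, b * b}
  have h1T : (1 : SL(2, F)) ∈ T := by simp [T]
  have hbT : b ∈ T := by simp [T, hbA]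
  have hbT' : b⁻¹ ∈ T := by simp [T, hbA]
  have ha₀T : a₀ ∈ T := by
    rcases ha₀ with rfl | ha₀
    exacts [h1T, by simp [T, mem_coe.1 ha₀]]
  have hW : W ⊆ T * (T * T) := by
    have hTT : T ⊆ T * T := subset_mul_left T h1T
    refine mul_subset_mul ?_ ?_
    · simp [insert_subset_iff, h1T, ha₀T]
    · simp [insert_subset_iff, hTT h1T, hTT hbT, hTT hbT', mul_mem_mul hbT hbT]
  have hcount : #A ≤ #S * #W := card_le_card_mul_card_of_forall_exists_mul_mem fun a ha => by
    obtain ⟨w, hw, hwE⟩ := hesc a ha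
    refine ⟨w, hw, mem_filter.2 ⟨?_, hwE⟩⟩
    rw [mul_assoc, mul_assoc]
    exact mul_mem_mul (by simp [T, ha]) (hW hw)
  have hW8 : #W ≤ 8 := card_mul_le.trans (Nat.mul_le_mul card_le_two card_le_four)
  have h8 : (#A : ℝ) ≤ #S * 8 := by exact_mod_cast hcount.trans (Nat.mul_le_mul_left _ hW8)
  have hS : (0 : ℝ) ≤ #S := Nat.cast_nonneg _
  linarith

theorem stmt_15 {F : Type*} [Field F] [Fintype F] [DecidableEq F]
    [DecidableEq (Matrix.SpecialLinearGroup (Fin 2) F)]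
    (A : Finset (Matrix.SpecialLinearGroup (Fin 2) F))
    (hgen : Subgroup.closure (A : Set (Matrix.SpecialLinearGroup (Fin 2) F)) = ⊤)
    (E : Subfield F) (hE : E ≠ ⊤) [DecidablePred (· ∈ E)]
    (hesc : ∃ a ∈ A, Matrix.trace a.val ∉ E) :
    (A.card : ℝ) / 12 ≤
      (((A ∪ A⁻¹ ∪ {1}) * (A ∪ A⁻¹ ∪ {1}) * (A ∪ A⁻¹ ∪ {1}) * (A ∪ A⁻¹ ∪ {1})).filter
        (fun g : Matrix.SpecialLinearGroup (Fin 2) F => Matrix.trace g.val ∉ E)).card :=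
  stmt_15_general A E hesc
end

section
/- Let G be a finite group generated by a subset A, and let H, K be proper subgroups of G. Then the set A^{[4]} of words of length at most 4 in A ∪ A⁻¹ ∪ {1} satisfies |A^{[4]} \ (H ∪ K)| ≥ |A|/4. -/
/-!
Call `g` good if `g ∉ H ∪ K`. It suffices to find sets `L ⊆ A^{[2]}` and `R ⊆ A^{[1]}` with
`|L| |R| ≤ 4` such that every `x ∈ A` has a good translate `l x r` with `l ∈ L`, `r ∈ R`:
then `A ⊆ L⁻¹ T R⁻¹`, where `T` is the set of good elements of `A^{[4]}`, so `|A| ≤ 4 |T|`.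

The translates come from a separating pair `a ∈ K \ H`, `b ∈ H \ K`: for every `x`, one of
`x, a x, x b, a x b` is good. If `A ⊆ H ∪ K`, then `A` contains such a pair since it generates
`G`. Otherwise pick `c ∈ A` good; either `x` or `c x` is good for all `x ∈ A`, or some `y ∈ A`
has `y, c y ∈ H ∪ K`, and then `c y, y` is a separating pair in one of the two orientations.
-/

open Pointwise Finset

section

variable {G : Type*} [Group G]

theorem Subgroup.exists_mem_notMem_of_closure_eq_top {A : Set G}
    (hgen : Subgroup.closure A = ⊤) {H : Subgroup G} (hH : H ≠ ⊤) : ∃ a ∈ A, a ∉ H := by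
  by_contra! hAH
  exact hH (top_unique (hgen ▸ (Subgroup.closure_le H).2 hAH))

variable [DecidableEq G]

theorem card_le_card_mul_card_mul_card_of_forall_exists_mul_mul_mem {A L R T : Finset G}
    (h : ∀ x ∈ A, ∃ l ∈ L, ∃ r ∈ R, l * x * r ∈ T) : #A ≤ #L * #R * #T := by
  have hA : A ⊆ L⁻¹ * T * R⁻¹ := by
    intro x hx
    obtain ⟨l, hl, r, hr, hT⟩ := h x hx
    exact mem_mul.2 ⟨l⁻¹ * (l * x * r), mul_mem_mul (inv_mem_inv hl) hT, r⁻¹,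
      inv_mem_inv hr, by group⟩
  calc #A ≤ #(L⁻¹ * T * R⁻¹) := card_le_card hA
    _ ≤ #L⁻¹ * #T * #R⁻¹ := card_mul_le.trans (Nat.mul_le_mul_right _ card_mul_le)
    _ = #L * #R * #T := by rw [card_inv, card_inv]; ring

variable {H K : Subgroup G}

theorem exists_good_translate_of_separating {a b : G} (haK : a ∈ K) (haH : a ∉ H)
    (hbH : b ∈ H) (hbK : b ∉ K) (x : G) :
    ∃ l ∈ ({1, a} : Finset G), ∃ r ∈ ({1, b} : Finset G), l * x * r ∉ H ∧ l * x * r ∉ K := by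
  by_cases hxH : x ∈ H <;> by_cases hxK : x ∈ K
  · refine ⟨a, by simp, b, by simp, ?_, ?_⟩
    · rwa [H.mul_mem_cancel_right hbH, H.mul_mem_cancel_right hxH]
    · rwa [mul_assoc, K.mul_mem_cancel_left haK, K.mul_mem_cancel_left hxK]
  · refine ⟨a, by simp, 1, by simp, ?_, ?_⟩
    · rwa [mul_one, H.mul_mem_cancel_right hxH]
    · rwa [mul_one, K.mul_mem_cancel_left haK]
  · refine ⟨1, by simp, b, by simp, ?_, ?_⟩
    · rwa [one_mul, H.mul_mem_cancel_right hbH]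
    · rwa [one_mul, K.mul_mem_cancel_left hxK]
  · exact ⟨1, by simp, 1, by simp, by simpa using hxH, by simpa using hxK⟩

theorem exists_good_translate_of_mul_mem_union {c y : G} (hcH : c ∉ H) (hcK : c ∉ K)
    (hy : y ∈ H ∨ y ∈ K) (hcy : c * y ∈ H ∨ c * y ∈ K) (x : G) :
    ∃ l ∈ ({1, c * y} : Finset G), ∃ r ∈ ({1, y} : Finset G),
      l * x * r ∉ H ∧ l * x * r ∉ K := by
  rcases hy with hyH | hyK
  · have hcyH : c * y ∉ H := by rwa [H.mul_mem_cancel_right hyH]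
    have hyK : y ∉ K := fun hyK => hcK ((K.mul_mem_cancel_right hyK).1 (hcy.resolve_left hcyH))
    exact exists_good_translate_of_separating (hcy.resolve_left hcyH) hcyH hyH hyK x
  · have hcyK : c * y ∉ K := by rwa [K.mul_mem_cancel_right hyK]
    have hyH : y ∉ H := fun hyH => hcH ((H.mul_mem_cancel_right hyH).1 (hcy.resolve_right hcyK))
    simpa only [and_comm] using
      exists_good_translate_of_separating (hcy.resolve_right hcyK) hcyK hyK hyH x

theorem exists_small_good_translates {A : Finset G} (hAH : ∃ a ∈ A, a ∉ H)
    (hAK : ∃ b ∈ A, b ∉ K) :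
    ∃ L R : Finset G, L ⊆ insert 1 A * insert 1 A ∧ R ⊆ insert 1 A ∧ #L * #R ≤ 4 ∧
      ∀ x ∈ A, ∃ l ∈ L, ∃ r ∈ R, l * x * r ∉ H ∧ l * x * r ∉ K := by
  have h1 : (1 : G) ∈ insert 1 A := mem_insert_self 1 A
  have hA : A ⊆ insert 1 A := subset_insert 1 A
  have h11 : (1 : G) ∈ insert 1 A * insert 1 A := subset_mul_left _ h1 h1
  have hcard : ∀ u v : G, #({1, u} : Finset G) * #({1, v} : Finset G) ≤ 4 :=
    fun _ _ => Nat.mul_le_mul card_le_two card_le_two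
  by_cases hgood : ∃ c ∈ A, c ∉ H ∧ c ∉ K
  · obtain ⟨c, hcA, hcH, hcK⟩ := hgood
    by_cases hstuck : ∃ y ∈ A, (y ∈ H ∨ y ∈ K) ∧ (c * y ∈ H ∨ c * y ∈ K)
    · obtain ⟨y, hyA, hy, hcy⟩ := hstuck
      refine ⟨{1, c * y}, {1, y}, ?_, ?_, hcard _ _,
        fun x _ => exists_good_translate_of_mul_mem_union hcH hcK hy hcy x⟩
      · exact insert_subset h11 (singleton_subset_iff.2 (mul_mem_mul (hA hcA) (hA hyA)))
      · exact insert_subset h1 (singleton_subset_iff.2 (hA hyA))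
    · push Not at hstuck
      refine ⟨{1, c}, {1}, ?_, singleton_subset_iff.2 h1, ?_, fun x hxA => ?_⟩
      · exact insert_subset h11 (singleton_subset_iff.2 (subset_mul_left _ h1 (hA hcA)))
      · rw [card_singleton, mul_one]
        exact card_le_two.trans (by norm_num)
      · by_cases hx : x ∉ H ∧ x ∉ K
        · exact ⟨1, by simp, 1, by simp, by simpa using hx⟩
        · exact ⟨c, by simp, 1, by simp, by simpa using hstuck x hxA (by tauto)⟩
  · push Not at hgood
    obtain ⟨a, haA, haH⟩ := hAH
    obtain ⟨b, hbA, hbK⟩ := hAK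
    have hbH : b ∈ H := by
      by_contra hbH
      exact hbK (hgood b hbA hbH)
    refine ⟨{1, a}, {1, b}, ?_, ?_, hcard _ _,
      fun x _ => exists_good_translate_of_separating (hgood a haA haH) haH hbH hbK x⟩
    · exact insert_subset h11 (singleton_subset_iff.2 (subset_mul_left _ h1 (hA haA)))
    · exact insert_subset h1 (singleton_subset_iff.2 (hA hbA))

end

theorem stmt_17 {G : Type*} [Group G] [DecidableEq G]
    (A : Finset G) (hgen : Subgroup.closure (A : Set G) = ⊤)
    (H K : Subgroup G) (hH : H ≠ ⊤) (hK : K ≠ ⊤)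
    [DecidablePred (· ∈ H)] [DecidablePred (· ∈ K)] :
    (A.card : ℝ) / 4 ≤
      (((A ∪ A⁻¹ ∪ {1}) * (A ∪ A⁻¹ ∪ {1}) * (A ∪ A⁻¹ ∪ {1}) * (A ∪ A⁻¹ ∪ {1})).filter
        (fun g => g ∉ H ∧ g ∉ K)).card := by
  set S := A ∪ A⁻¹ ∪ {1}
  obtain ⟨L, R, hL, hR, hLR, hgood⟩ := exists_small_good_translates
    (Subgroup.exists_mem_notMem_of_closure_eq_top hgen hH)
    (Subgroup.exists_mem_notMem_of_closure_eq_top hgen hK)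
  have hAS : insert 1 A ⊆ S := by
    intro x; simp only [mem_insert, S, mem_union, mem_singleton]; tauto
  have hcount := card_le_card_mul_card_mul_card_of_forall_exists_mul_mul_mem
    (T := (S * S * S * S).filter (fun g => g ∉ H ∧ g ∉ K)) <| by
    intro x hx
    obtain ⟨l, hl, r, hr, hlxr⟩ := hgood x hx
    refine ⟨l, hl, r, hr, mem_filter.2 ⟨mul_mem_mul (mul_mem_mul ?_ ?_) ?_, hlxr⟩⟩
    · exact mul_subset_mul hAS hAS (hL hl)
    · exact hAS (mem_insert_of_mem hx)
    · exact hAS (hR hr)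
  rw [div_le_iff₀ (by norm_num)]
  exact_mod_cast hcount.trans (Nat.mul_le_mul_right _ hLR) |>.trans_eq (mul_comm _ _)
end

section
/- Let F be a field and U a finite nonempty subset of SL₂(F) containing no triangular matrices (i.e., every u = [[a,b],[c,d]] ∈ U has b ≠ 0 and c ≠ 0). Then |Tr(U·U⁻¹)| ≥ |U| / (2·|Diag(U)|), where Diag(U) = {(a,d) : [[a,b],[c,d]] ∈ U} is the set of diagonals occurring in U. -/
/-!
Fix `u ∈ U` and consider the `v ∈ U` with the same diagonal. Since `det v = 1`, such a `v`
is determined by its entry `v 0 1`, and `Tr(u v⁻¹) = t` becomes a quadratic equation in `v 0 1`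
with leading coefficient `u 1 0 ≠ 0`. So each trace in `Tr(U U⁻¹)` is hit by at most two such `v`,
every diagonal class of `U` has at most `2 |Tr(U U⁻¹)|` elements, and `|U| ≤ 2 |Tr(U U⁻¹)| |Diag(U)|`.
-/

open Pointwise Polynomial Finset
open scoped MatrixGroups

lemma Polynomial.card_le_two_of_forall_quadratic_eq_zero {R : Type*} [CommRing R] [IsDomain R]
    {a b c : R} (ha : a ≠ 0) {s : Finset R} (hs : ∀ x ∈ s, a * x ^ 2 + b * x + c = 0) :
    #s ≤ 2 := by
  have hdeg := natDegree_quadratic (b := b) (c := c) ha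
  have hp : C a * X ^ 2 + C b * X + C c ≠ 0 := ne_zero_of_natDegree_gt (n := 0) (by omega)
  calc #s ≤ (C a * X ^ 2 + C b * X + C c).natDegree :=
        card_le_degree_of_subset_roots fun x hx ↦ (mem_roots hp).2 (by simpa using hs x hx)
    _ = 2 := hdeg

namespace Matrix.SpecialLinearGroup

lemma trace_mul_inv_fin_two {R : Type*} [CommRing R] (u v : SL(2, R)) :
    trace (u * v⁻¹ : SL(2, R)).val =
      u 0 0 * v 1 1 - u 0 1 * v 1 0 - u 1 0 * v 0 1 + u 1 1 * v 0 0 := by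
  rw [SL2_inv_expl]
  change trace (u.val * !![v 1 1, -v 0 1; -v 1 0, v 0 0]) = _
  simp [trace_fin_two, mul_apply, Fin.sum_univ_two]
  ring

lemma fin_two_ext_of_apply_zero_one_ne_zero {R : Type*} [CommRing R] [IsDomain R]
    {x y : SL(2, R)} (h00 : x 0 0 = y 0 0) (h01 : x 0 1 = y 0 1) (h11 : x 1 1 = y 1 1)
    (hx : x 0 1 ≠ 0) : x = y := by
  have hdx := x.prop
  have hdy := y.prop
  rw [det_fin_two] at hdx hdy
  have h10 : x 1 0 = y 1 0 :=
    mul_left_cancel₀ hx <| by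
      linear_combination hdy - hdx + x 1 1 * h00 - y 1 0 * h01 + y 0 0 * h11
  ext i j
  fin_cases i <;> fin_cases j <;> assumption

end Matrix.SpecialLinearGroup

section

open Matrix Matrix.SpecialLinearGroup

variable {F : Type*} [Field F] [DecidableEq F]

lemma card_filter_trace_mul_inv_eq_le_two {u : SL(2, F)} (hu : u 1 0 ≠ 0) {V : Finset SL(2, F)}
    (hV : ∀ v ∈ V, v 0 0 = u 0 0 ∧ v 1 1 = u 1 1 ∧ v 0 1 ≠ 0) (t : F) :
    #{v ∈ V | trace (u * v⁻¹ : SL(2, F)).val = t} ≤ 2 := by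
  have hinj : Set.InjOn (fun v : SL(2, F) ↦ v 0 1)
      ({v ∈ V | trace (u * v⁻¹ : SL(2, F)).val = t} : Finset SL(2, F)) := by
    intro x hx y hy hxy
    obtain ⟨hx00, hx11, hx01⟩ := hV x (mem_filter.1 hx).1
    obtain ⟨hy00, hy11, -⟩ := hV y (mem_filter.1 hy).1
    exact fin_two_ext_of_apply_zero_one_ne_zero (hx00.trans hy00.symm) hxy
      (hx11.trans hy11.symm) hx01
  rw [← card_image_of_injOn hinj]
  refine Polynomial.card_le_two_of_forall_quadratic_eq_zero (a := u 1 0)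
    (b := t - 2 * (u 0 0 * u 1 1)) (c := u 0 1 * (u 0 0 * u 1 1 - 1)) hu ?_
  simp only [mem_image, mem_filter]
  rintro _ ⟨v, ⟨hvV, htr⟩, rfl⟩
  obtain ⟨h00, h11, -⟩ := hV v hvV
  have hdet := v.prop
  rw [det_fin_two, h00, h11] at hdet
  rw [trace_mul_inv_fin_two, h00, h11] at htr
  linear_combination (-v 0 1) * htr + u 0 1 * hdet

lemma card_filter_diag_eq_le_two_mul_card_trace {U : Finset SL(2, F)} [DecidableEq SL(2, F)]
    (htri : ∀ u ∈ U, u 0 1 ≠ 0 ∧ u 1 0 ≠ 0) {u : SL(2, F)} (hu : u ∈ U) :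
    #{v ∈ U | (v 0 0, v 1 1) = (u 0 0, u 1 1)} ≤
      2 * #((U * U⁻¹).image fun g ↦ trace g.val) := by
  refine card_le_mul_card_image_of_maps_to (f := fun v ↦ trace (u * v⁻¹ : SL(2, F)).val)
    (fun v hv ↦ mem_image.2 ⟨u * v⁻¹, mul_mem_mul hu (inv_mem_inv (mem_filter.1 hv).1), rfl⟩)
    2 fun t _ ↦ card_filter_trace_mul_inv_eq_le_two (htri u hu).2 (fun v hv ↦ ?_) t
  obtain ⟨hvU, hdiag⟩ := mem_filter.1 hv
  exact ⟨congrArg Prod.fst hdiag, congrArg Prod.snd hdiag, (htri v hvU).1⟩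

end

theorem stmt_19_general {F : Type*} [Field F] [DecidableEq F]
    [DecidableEq (Matrix.SpecialLinearGroup (Fin 2) F)]
    (U : Finset (Matrix.SpecialLinearGroup (Fin 2) F))
    (htri : ∀ u ∈ U, u.val 0 1 ≠ 0 ∧ u.val 1 0 ≠ 0) :
    (U.card : ℝ) / (2 * (U.image fun u => (u.val 0 0, u.val 1 1)).card) ≤
      (((U * U⁻¹).image fun g => Matrix.trace g.val).card : ℝ) := by
  have key : #U ≤ 2 * #((U * U⁻¹).image fun g ↦ Matrix.trace g.val) *
      #(U.image fun u ↦ (u.val 0 0, u.val 1 1)) := by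
    refine card_le_mul_card_image U _ fun d hd ↦ ?_
    obtain ⟨u, hu, rfl⟩ := mem_image.1 hd
    exact card_filter_diag_eq_le_two_mul_card_trace htri hu
  refine div_le_of_le_mul₀ (by positivity) (by positivity) ?_
  have key' := (Nat.cast_le (α := ℝ)).2 key
  push_cast at key'
  linarith

theorem stmt_19 {F : Type*} [Field F] [DecidableEq F]
    [DecidableEq (Matrix.SpecialLinearGroup (Fin 2) F)]
    (U : Finset (Matrix.SpecialLinearGroup (Fin 2) F)) (hU : U.Nonempty)
    (htri : ∀ u ∈ U, u.val 0 1 ≠ 0 ∧ u.val 1 0 ≠ 0) :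
    (U.card : ℝ) / (2 * (U.image fun u => (u.val 0 0, u.val 1 1)).card) ≤
      (((U * U⁻¹).image fun g => Matrix.trace g.val).card : ℝ) :=
  stmt_19_general U htri
end
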